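/- If a is a closed term of Λ over the single atomic type p and ā is the type-instance of a obtained by substituting N_i for p, then ā i-defines V_a, the common value of V_{a,f} for all assignments f in the P-model. -/

import Mathlib

set_option autoImplicit false

/-- Simple types over a set `ν` of atomic types. -/
inductive Ty (ν : Type) : Type
  | atom : ν → Ty ν
  | arrow : Ty ν → Ty ν → Ty ν

/-- A typing context: the (types of the) free variables. -/
abbrev Ctx (ν : Type) : Type := List (Ty ν)

/-- Typed de Bruijn variables. -/
inductive Var {ν : Type} : Ctx ν → Ty ν → Type
  | vz {Γ : Ctx ν} {A : Ty ν} : Var (A :: Γ) A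
  | vs {Γ : Ctx ν} {A B : Ty ν} : Var Γ A → Var (B :: Γ) A

/-- Typed terms of the simply typed lambda calculus Λ. -/
inductive Tm {ν : Type} : Ctx ν → Ty ν → Type
  | var {Γ : Ctx ν} {A : Ty ν} : Var Γ A → Tm Γ A
  | app {Γ : Ctx ν} {A B : Ty ν} : Tm Γ (Ty.arrow A B) → Tm Γ A → Tm Γ B
  | lam {Γ : Ctx ν} {A B : Ty ν} : Tm (A :: Γ) B → Tm Γ (Ty.arrow A B)

/-- Renamings between contexts. -/
def Ren {ν : Type} (Γ Δ : Ctx ν) : Type := ∀ A : Ty ν, Var Γ A → Var Δ A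

def Ren.ext {ν : Type} {Γ Δ : Ctx ν} (ρ : Ren Γ Δ) (A : Ty ν) : Ren (A :: Γ) (A :: Δ) :=
  fun _ v => match v with
  | .vz => .vz
  | .vs w => .vs (ρ _ w)

def Tm.rename {ν : Type} : ∀ {Γ Δ : Ctx ν} {A : Ty ν}, Ren Γ Δ → Tm Γ A → Tm Δ A
  | _, _, _, ρ, .var v => .var (ρ _ v)
  | _, _, _, ρ, .app f a => .app (f.rename ρ) (a.rename ρ)
  | _, _, _, ρ, .lam b => .lam (b.rename (ρ.ext _))

/-- Simultaneous substitutions. -/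
def Subst {ν : Type} (Γ Δ : Ctx ν) : Type := ∀ A : Ty ν, Var Γ A → Tm Δ A

def Subst.ext {ν : Type} {Γ Δ : Ctx ν} (σ : Subst Γ Δ) (A : Ty ν) :
    ∀ B : Ty ν, Var (A :: Γ) B → Tm (A :: Δ) B
  | _, .vz => .var .vz
  | _, .vs w => (σ _ w).rename (fun _ => Var.vs)

def Tm.subst {ν : Type} : ∀ {Γ Δ : Ctx ν} {A : Ty ν}, Subst Γ Δ → Tm Γ A → Tm Δ A
  | _, _, _, σ, .var v => σ _ v
  | _, _, _, σ, .app f a => .app (f.subst σ) (a.subst σ)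
  | _, _, _, σ, .lam b => .lam (b.subst (Subst.ext σ _))

/-- Extending a substitution with a term for the last variable. -/
def Subst.cons {ν : Type} {Γ Δ : Ctx ν} {A : Ty ν} (b : Tm Δ A) (σ : Subst Γ Δ) :
    ∀ B : Ty ν, Var (A :: Γ) B → Tm Δ B
  | _, .vz => b
  | _, .vs w => σ _ w

/-- Substitution of a single term for the last variable: `a[b/x]`. -/
def Tm.subst1 {ν : Type} {Γ : Ctx ν} {A B : Ty ν} (a : Tm (A :: Γ) B) (b : Tm Γ A) : Tm Γ B :=
  a.subst (Subst.cons b (fun _ v => .var v))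

/-- The theory Λ of βη-equality. -/
inductive Eqv {ν : Type} : ∀ {Γ : Ctx ν} {A : Ty ν}, Tm Γ A → Tm Γ A → Prop
  | refl {Γ : Ctx ν} {A : Ty ν} (a : Tm Γ A) : Eqv a a
  | symm {Γ : Ctx ν} {A : Ty ν} {a b : Tm Γ A} : Eqv a b → Eqv b a
  | trans {Γ : Ctx ν} {A : Ty ν} {a b c : Tm Γ A} : Eqv a b → Eqv b c → Eqv a c
  | congApp {Γ : Ctx ν} {A B : Ty ν} {f g : Tm Γ (Ty.arrow A B)} {a b : Tm Γ A} :
      Eqv f g → Eqv a b → Eqv (.app f a) (.app g b)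
  | congLam {Γ : Ctx ν} {A B : Ty ν} {a b : Tm (A :: Γ) B} :
      Eqv a b → Eqv (.lam a) (.lam b)
  | beta {Γ : Ctx ν} {A B : Ty ν} (a : Tm (A :: Γ) B) (b : Tm Γ A) :
      Eqv (.app (.lam a) b) (a.subst1 b)
  | eta {Γ : Ctx ν} {A B : Ty ν} (a : Tm Γ (Ty.arrow A B)) :
      Eqv (.lam (.app (a.rename (fun _ => Var.vs)) (.var .vz))) a

/-- Substitution of types for the atomic types, on types. -/
def Ty.substA {ν : Type} (σ : ν → Ty ν) : Ty ν → Ty ν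
  | .atom v => σ v
  | .arrow A B => .arrow (A.substA σ) (B.substA σ)

def Var.substA {ν : Type} (σ : ν → Ty ν) :
    ∀ {Γ : Ctx ν} {A : Ty ν}, Var Γ A → Var (Γ.map (Ty.substA σ)) (A.substA σ)
  | _, _, .vz => .vz
  | _, _, .vs v => .vs (v.substA σ)

/-- Substitution of types for the atomic types, on terms: type-instances. -/
def Tm.substA {ν : Type} (σ : ν → Ty ν) :
    ∀ {Γ : Ctx ν} {A : Ty ν}, Tm Γ A → Tm (Γ.map (Ty.substA σ)) (A.substA σ)
  | _, _, .var v => .var (v.substA σ)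
  | _, _, .app f a => .app (f.substA σ) (a.substA σ)
  | _, _, .lam b => .lam (b.substA σ)

/-- `Ty.arrs [A₁, …, Aₘ] B = Aₘ → (… → (A₁ → B))` : the type of `λx₁…xₘ.a`. -/
def Ty.arrs {ν : Type} : Ctx ν → Ty ν → Ty ν
  | [], B => B
  | A :: Γ, B => Ty.arrs Γ (Ty.arrow A B)

/-- λ-abstracting all the free variables of a term. -/
def Tm.lamAll {ν : Type} : ∀ {Γ : Ctx ν} {A : Ty ν}, Tm Γ A → Tm [] (Ty.arrs Γ A)
  | [], _, a => a
  | _ :: Γ, _, a => Tm.lamAll (Γ := Γ) (Tm.lam a)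

/-- `Ty.arrsR [B₁, …, Bₙ] C = B₁ → (… → (Bₙ → C))`. -/
def Ty.arrsR {ν : Type} : List (Ty ν) → Ty ν → Ty ν
  | [], C => C
  | B :: Bs, C => Ty.arrow B (Ty.arrsR Bs C)

/-- A list of terms `h₁ : B₁, …, hₙ : Bₙ` in context `Δ`. -/
inductive HList {ν : Type} (Δ : Ctx ν) : List (Ty ν) → Type
  | nil : HList Δ []
  | cons {B : Ty ν} {Bs : List (Ty ν)} : Tm Δ B → HList Δ Bs → HList Δ (B :: Bs)

/-- Iterated application `t h₁ … hₙ`. -/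
def HList.apps {ν : Type} {Δ : Ctx ν} :
    ∀ {Bs : List (Ty ν)} {C : Ty ν}, HList Δ Bs → Tm Δ (Ty.arrsR Bs C) → Tm Δ C
  | _, _, .nil, t => t
  | _, _, .cons h hs, t => HList.apps hs (t.app h)

/-- Iterated application `t h₁ … hₙ`. -/
def Tm.apps {ν : Type} {Δ : Ctx ν} {Bs : List (Ty ν)} {C : Ty ν}
    (t : Tm Δ (Ty.arrsR Bs C)) (hs : HList Δ Bs) : Tm Δ C :=
  hs.apps t

/-- Weakening of a closed term into an arbitrary context. -/
def Var.elim0 {ν : Type} {A : Ty ν} {C : Sort*} : Var ([] : Ctx ν) A → C :=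
  fun v => nomatch v

def Tm.wk {ν : Type} {Δ : Ctx ν} {A : Ty ν} (t : Tm ([] : Ctx ν) A) : Tm Δ A :=
  t.rename (fun _ v => v.elim0)

/-! Λ built over the single atomic type `p`, represented by `Unit`. -/

/-- `AT 0 = p`, `AT (n+1) = AT n → AT n`. -/
def AT : ℕ → Ty Unit
  | 0 => .atom ()
  | n + 1 => .arrow (AT n) (AT n)

/-- `NT i = (AT i → AT i) → (AT i → AT i)`, the type `N_i` of Church numerals. -/
def NT (i : ℕ) : Ty Unit := .arrow (AT (i + 1)) (AT (i + 1))

/-- `iter f x n = f (f (… (f x)))` (`n` times). -/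
def Tm.iter {Γ : Ctx Unit} {A : Ty Unit} (f : Tm Γ (Ty.arrow A A)) (x : Tm Γ A) : ℕ → Tm Γ A
  | 0 => x
  | n + 1 => f.app (Tm.iter f x n)

/-- The Church numeral `[n]_i : N_i`, i.e. `λ x y. xⁿ(y)`. -/
def church (i n : ℕ) : Tm [] (NT i) :=
  .lam (.lam (Tm.iter (.var (.vs .vz)) (.var .vz) n))

/-- The full type structure over the finite ordinal `P = {0, …, h−1}`:
`P`-types and their `P`-functionals.  `interp h A` is `A^p_P`. -/
def interp (h : ℕ) : Ty Unit → Type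
  | .atom _ => Fin h
  | .arrow A B => interp h A → interp h B

/-- The type substitution replacing the atomic type `p` by `N_i`; `A.substA (subN i)`
is the type `Aⁱ`. -/
def subN (i : ℕ) : Unit → Ty Unit := fun _ => NT i

/-- `iDefines h i A φ t`: the closed term `t : Aⁱ` `i`-defines the `P`-functional
`φ ∈ A` (where `P = {0, …, h−1}`). -/
def iDefines (h i : ℕ) : ∀ A : Ty Unit, interp h A → Tm [] (A.substA (subN i)) → Prop
  | .atom _, n, t => Eqv t (church i n.val)
  | .arrow B C, φ, t => ∀ (ψ : interp h B) (b : Tm [] (B.substA (subN i))),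
      iDefines h i B ψ b → iDefines h i C (φ ψ) (t.app b)

/-- An assignment in the `P`-model: a function assigning to each variable `x : A`
a `P`-functional in `A^p_P`. -/
def Assign (h : ℕ) (Γ : Ctx Unit) : Type := ∀ A : Ty Unit, Var Γ A → interp h A

/-- Extending an assignment: `f[x := α]`. -/
def Assign.cons {h : ℕ} {Γ : Ctx Unit} {A : Ty Unit} (α : interp h A) (f : Assign h Γ) :
    ∀ B : Ty Unit, Var (A :: Γ) B → interp h B
  | _, .vz => α
  | _, .vs v => f _ v

/-- The value `V_{a,f}` of a term in the `P`-model `⟨F, V⟩`, satisfying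
`V_{x,f} = f(x)`, `V_{ab,f} = V_{a,f}(V_{b,f})` and `V_{λx.a,f}(α) = V_{a,f[x:=α]}`. -/
def pval (h : ℕ) : ∀ {Γ : Ctx Unit} {A : Ty Unit}, Tm Γ A → Assign h Γ → interp h A
  | _, _, .var v, f => f _ v
  | _, _, .app a b, f => pval h a f (pval h b f)
  | _, _, .lam a, f => fun α => pval h a (Assign.cons α f)

/-! ### Auxiliary substitution lemmas -/

theorem Ren.ext_comp {ν : Type} {Γ Δ E : Ctx ν} (ρ : Ren Γ Δ) (ρ' : Ren Δ E) (A : Ty ν) :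
    Ren.ext (fun B v => ρ' B (ρ B v)) A = fun B v => Ren.ext ρ' A B (Ren.ext ρ A B v) := by
  funext B v
  cases v <;> rfl

theorem Tm.rename_rename {ν : Type} :
    ∀ {Γ Δ E : Ctx ν} {A : Ty ν} (t : Tm Γ A) (ρ : Ren Γ Δ) (ρ' : Ren Δ E),
      (t.rename ρ).rename ρ' = t.rename (fun B v => ρ' B (ρ B v))
  | _, _, _, _, .var v, _, _ => rfl
  | _, _, _, _, .app f a, ρ, ρ' => by
      simp [Tm.rename, Tm.rename_rename f ρ ρ', Tm.rename_rename a ρ ρ']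
  | _, _, _, _, .lam b, ρ, ρ' => by
      simp [Tm.rename, Tm.rename_rename b (ρ.ext _) (ρ'.ext _), Ren.ext_comp]

theorem Subst.ext_ren_comp {ν : Type} {Γ Δ E : Ctx ν} (ρ : Ren Γ Δ) (σ : Subst Δ E) (A : Ty ν) :
    Subst.ext (fun B v => σ B (ρ B v)) A = fun B v => Subst.ext σ A B (Ren.ext ρ A B v) := by
  funext B v
  cases v <;> rfl

theorem Tm.subst_rename {ν : Type} :
    ∀ {Γ Δ E : Ctx ν} {A : Ty ν} (t : Tm Γ A) (ρ : Ren Γ Δ) (σ : Subst Δ E),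
      (t.rename ρ).subst σ = t.subst (fun B v => σ B (ρ B v))
  | _, _, _, _, .var v, _, _ => rfl
  | _, _, _, _, .app f a, ρ, σ => by
      simp [Tm.rename, Tm.subst, Tm.subst_rename f ρ σ, Tm.subst_rename a ρ σ]
  | _, _, _, _, .lam b, ρ, σ => by
      simp [Tm.rename, Tm.subst, Tm.subst_rename b (ρ.ext _) (σ.ext _), Subst.ext_ren_comp]

theorem Subst.ext_ren_comp' {ν : Type} {Γ Δ E : Ctx ν} (σ : Subst Γ Δ) (ρ : Ren Δ E) (A : Ty ν) :
    Subst.ext (fun B v => (σ B v).rename ρ) A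
      = fun B v => (Subst.ext σ A B v).rename (Ren.ext ρ A) := by
  funext B v
  cases v with
  | vz => rfl
  | vs w =>
      show ((σ _ w).rename ρ).rename (fun _ => Var.vs)
        = ((σ _ w).rename (fun _ => Var.vs)).rename (Ren.ext ρ A)
      exact (Tm.rename_rename (σ _ w) ρ (fun _ => Var.vs)).trans
        (Tm.rename_rename (σ _ w) (fun _ => Var.vs) (Ren.ext ρ A)).symm

theorem Tm.rename_subst {ν : Type} :
    ∀ {Γ Δ E : Ctx ν} {A : Ty ν} (t : Tm Γ A) (σ : Subst Γ Δ) (ρ : Ren Δ E),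
      (t.subst σ).rename ρ = t.subst (fun B v => (σ B v).rename ρ)
  | _, _, _, _, .var v, _, _ => rfl
  | _, _, _, _, .app f a, σ, ρ => by
      simp [Tm.rename, Tm.subst, Tm.rename_subst f σ ρ, Tm.rename_subst a σ ρ]
  | _, _, _, _, .lam b, σ, ρ => by
      simp [Tm.rename, Tm.subst, Tm.rename_subst b (σ.ext _) (ρ.ext _), Subst.ext_ren_comp']

theorem Subst.ext_comp {ν : Type} {Γ Δ E : Ctx ν} (σ : Subst Γ Δ) (τ : Subst Δ E) (A : Ty ν) :
    Subst.ext (fun B v => (σ B v).subst τ) A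
      = fun B v => (Subst.ext σ A B v).subst (Subst.ext τ A) := by
  funext B v
  cases v with
  | vz => rfl
  | vs w =>
      show ((σ _ w).subst τ).rename (fun _ => Var.vs)
        = ((σ _ w).rename (fun _ => Var.vs)).subst (Subst.ext τ A)
      exact (Tm.rename_subst (σ _ w) τ (fun _ => Var.vs)).trans
        (Tm.subst_rename (σ _ w) (fun _ => Var.vs) (Subst.ext τ A)).symm

theorem Tm.subst_subst {ν : Type} :
    ∀ {Γ Δ E : Ctx ν} {A : Ty ν} (t : Tm Γ A) (σ : Subst Γ Δ) (τ : Subst Δ E),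
      (t.subst σ).subst τ = t.subst (fun B v => (σ B v).subst τ)
  | _, _, _, _, .var v, _, _ => rfl
  | _, _, _, _, .app f a, σ, τ => by
      simp [Tm.subst, Tm.subst_subst f σ τ, Tm.subst_subst a σ τ]
  | _, _, _, _, .lam b, σ, τ => by
      simp [Tm.subst, Tm.subst_subst b (σ.ext _) (τ.ext _), Subst.ext_comp]

theorem Tm.subst_id {ν : Type} {Γ : Ctx ν} {A : Ty ν} (t : Tm Γ A) :
    t.subst (fun _ v => .var v) = t := by
  induction t with
  | var v => rfl
  | app f a ihf iha => simp [Tm.subst, ihf, iha]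
  | lam c ih =>
      simp only [Tm.subst]
      congr 1
      rw [← ih]
      congr 1
      funext C v
      cases v <;> rfl

/-- `(a.subst (ext σ))[b] = a.subst (cons b σ)`. -/
theorem Tm.subst_ext_subst1 {ν : Type} {Γ Δ : Ctx ν} {A B : Ty ν}
    (a : Tm (A :: Γ) B) (σ : Subst Γ Δ) (b : Tm Δ A) :
    (a.subst (Subst.ext σ A)).subst1 b = a.subst (Subst.cons b σ) := by
  unfold Tm.subst1
  refine (Tm.subst_subst _ _ _).trans ?_
  congr 1
  funext C v
  cases v with
  | vz => rfl
  | vs w =>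
      show ((σ _ w).rename (fun _ => Var.vs)).subst (Subst.cons b fun _ v => .var v) = σ _ w
      refine (Tm.subst_rename _ _ _).trans ?_
      exact Tm.subst_id (σ _ w)

/-- `iDefines` is invariant under `Eqv`. -/
theorem iDefines_eqv (h i : ℕ) :
    ∀ (A : Ty Unit) (φ : interp h A) {t t' : Tm [] (A.substA (subN i))},
      Eqv t t' → iDefines h i A φ t → iDefines h i A φ t'
  | .atom _, φ, t, t', e, hd => Eqv.trans (Eqv.symm e) hd
  | .arrow B C, φ, t, t', e, hd => fun ψ b hb =>
      iDefines_eqv h i C (φ ψ) (Eqv.congApp e (Eqv.refl b)) (hd ψ b hb)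

/-- The fundamental lemma: for open terms, closing substitutions that define the
assignment yield terms defining the value. -/
theorem fundamental (h i : ℕ) :
    ∀ {Γ : Ctx Unit} {A : Ty Unit} (a : Tm Γ A) (f : Assign h Γ)
      (σ : Subst (Γ.map (Ty.substA (subN i))) []),
      (∀ (B : Ty Unit) (v : Var Γ B), iDefines h i B (f B v) (σ _ (v.substA (subN i)))) →
      iDefines h i A (pval h a f) ((a.substA (subN i)).subst σ)
  | _, _, .var v, f, σ, hσ => hσ _ v
  | _, _, .app t u, f, σ, hσ =>
      fundamental h i t f σ hσ (pval h u f) _ (fundamental h i u f σ hσ)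
  | Γ, .arrow A B, .lam a, f, σ, hσ => by
      intro ψ b hb
      have key := fundamental h i a (Assign.cons ψ f)
        (Subst.cons b σ) (by
          intro C v
          cases v with
          | vz => exact hb
          | vs w => exact hσ _ w)
      refine iDefines_eqv h i B _ ?_ key
      have e1 : Eqv (Tm.app (((a.substA (subN i)).lam).subst σ) b)
          (((a.substA (subN i)).subst (Subst.ext σ _)).subst1 b) := Eqv.beta _ _
      rw [Tm.subst_ext_subst1] at e1
      exact Eqv.symm e1

/--
**Lemma 5.2.** If `a` is a closed term of Λ (over the single atomic type `p`) and `ā`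
is the type-instance of `a` obtained by substituting `N_i` for `p`, then `ā`
`i`-defines `V_a`, the common value of `V_{a,f}` for all assignments `f` in the
`P`-model (`P = {0, …, h−1}`, `h ≥ 2`).
-/
theorem closed_instance_defines (h : ℕ) (hh : 2 ≤ h) (i : ℕ)
    {A : Ty Unit} (a : Tm ([] : Ctx Unit) A) :
    ∀ f : Assign h [], iDefines h i A (pval h a f) (a.substA (subN i)) := by
  intro f
  have := fundamental h i a f (fun _ v => .var v) (fun B v => v.elim0)
  rwa [Tm.subst_id] at this
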